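/- arXiv:2107.07469 — 2 statements merged into one kernel-verified Lean document; each statement's English description precedes it below -/
import Mathlib

section
/- Let h = α•1₂ : Matrix (Fin 2) (Fin 2) ℂ. Then PT (Aᴴ * (1₂⊗h⊗h) * A) = h; equivalently, PT (Aᴴ * A) = α⁻¹•1₂. -/
open Matrix Kronecker

noncomputable section

/-- The Pauli z-matrix. -/
def σz : Matrix (Fin 2) (Fin 2) ℂ := !![1, 0; 0, -1]

/-- The threefold tensor product `M₂ ⊗ M₂ ⊗ M₂`, realized via Kronecker products. -/
abbrev M3 : Type := Matrix (Fin 2 × Fin 2 × Fin 2) (Fin 2 × Fin 2 × Fin 2) ℂ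

/-- `tp a b c` is the elementary tensor `a ⊗ b ⊗ c` in `M₂ ⊗ M₂ ⊗ M₂`. -/
def tp (a b c : Matrix (Fin 2) (Fin 2) ℂ) : M3 := a ⊗ₖ (b ⊗ₖ c)

def K₀ (β : ℝ) : ℝ := (Real.exp β + 1) / 2
def K₃ (β : ℝ) : ℝ := (Real.exp β - 1) / 2
def R₀ (β J : ℝ) : ℝ := (Real.exp (J * β) + 1) / 2
def R₃ (β J : ℝ) : ℝ := (Real.exp (J * β) - 1) / 2

/-- `K¹² = K₀•(1⊗1⊗1) + K₃•(σ⊗σ⊗1)`. -/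
def K12 (β : ℝ) : M3 := ((K₀ β : ℝ) : ℂ) • tp 1 1 1 + ((K₃ β : ℝ) : ℂ) • tp σz σz 1

/-- `K¹³ = K₀•(1⊗1⊗1) + K₃•(σ⊗1⊗σ)`. -/
def K13 (β : ℝ) : M3 := ((K₀ β : ℝ) : ℂ) • tp 1 1 1 + ((K₃ β : ℝ) : ℂ) • tp σz 1 σz

/-- `L²³ = R₀•(1⊗1⊗1) + R₃•(1⊗σ⊗σ)`. -/
def L23 (β J : ℝ) : M3 := ((R₀ β J : ℝ) : ℂ) • tp 1 1 1 + ((R₃ β J : ℝ) : ℂ) • tp 1 σz σz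

/-- The transfer operator `A = K¹² K¹³ L²³` of the Ising model with competing interactions. -/
def A (β J : ℝ) : M3 := K12 β * K13 β * L23 β J

/-- The normalizing constant `α`. -/
def αc (β J : ℝ) : ℝ :=
  4 / (Real.exp (2 * J * β) * (Real.exp (4 * β) + 1) + 2 * Real.exp (2 * β))

/-- The normalized partial trace over the second and third tensor factors. -/
def PT (m : M3) : Matrix (Fin 2) (Fin 2) ℂ :=
  Matrix.of fun s t => (1 / 4 : ℂ) * ∑ u : Fin 2, ∑ v : Fin 2, m (s, u, v) (t, u, v)


/-!
`A` is a real combination `a + b (1⊗σ⊗σ) + c (σ⊗1⊗σ + σ⊗σ⊗1)` of commuting Hermitian Pauli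
strings, so `Aᴴ A = A²`. The partial trace kills every string with a `σ` in the second or third
factor, which leaves `PT (Aᴴ A) = a² + b² + 2c²`; with `e = exp β`, `f = exp (J β)` one finds
`a + b = (e² + 1) f / 2`, `a - b = e`, `c = (e² - 1) f / 4`, whence
`a² + b² + 2c² = (f² (e⁴ + 1) + 2 e²) / 4 = α⁻¹`. The first equation follows because
`1⊗h⊗h = α² • 1`.
-/

lemma tp_mul (a b c a' b' c' : Matrix (Fin 2) (Fin 2) ℂ) :
    tp a b c * tp a' b' c' = tp (a * a') (b * b') (c * c') := by
  simp only [tp, ← Matrix.mul_kronecker_mul]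

lemma conjTranspose_tp (a b c : Matrix (Fin 2) (Fin 2) ℂ) : (tp a b c)ᴴ = tp aᴴ bᴴ cᴴ := by
  simp only [tp, Matrix.conjTranspose_kronecker]

lemma tp_smul_smul (x y : ℂ) (a b c : Matrix (Fin 2) (Fin 2) ℂ) :
    tp a (x • b) (y • c) = (x * y) • tp a b c := by
  simp only [tp, Matrix.kronecker_smul, Matrix.smul_kronecker, smul_smul, mul_comm y x]

lemma tp_one_one_one : tp 1 1 1 = 1 := by
  simp only [tp, Matrix.one_kronecker_one]

lemma σz_mul_σz : σz * σz = 1 := by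
  ext i j
  fin_cases i <;> fin_cases j <;> simp [σz, Matrix.mul_apply, Fin.sum_univ_two]

lemma conjTranspose_σz : σzᴴ = σz := by
  ext i j
  fin_cases i <;> fin_cases j <;> simp [σz]

lemma trace_σz : σz.trace = 0 := by
  simp [σz, Matrix.trace, Fin.sum_univ_two]

lemma PT_add (m n : M3) : PT (m + n) = PT m + PT n := by
  ext s t
  simp only [PT, Matrix.of_apply, Matrix.add_apply, Finset.sum_add_distrib]
  ring

lemma PT_smul (x : ℂ) (m : M3) : PT (x • m) = x • PT m := by
  ext s t
  simp only [PT, Matrix.of_apply, Matrix.smul_apply, smul_eq_mul, ← Finset.mul_sum]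
  ring

lemma PT_tp (a b c : Matrix (Fin 2) (Fin 2) ℂ) :
    PT (tp a b c) = (b.trace / 2 * (c.trace / 2)) • a := by
  ext s t
  simp only [PT, tp, Matrix.of_apply, Matrix.kronecker_apply, Matrix.smul_apply, smul_eq_mul,
    Matrix.trace, Matrix.diag, Fin.sum_univ_two]
  ring

/-- Since `σz² = 1`, the strings `1⊗1⊗1, 1⊗σ⊗σ, σ⊗1⊗σ, σ⊗σ⊗1` form a Klein four-group, so
their span is a commutative algebra containing `K¹²`, `K¹³`, `L²³` and hence `A`. -/
def pauliComb (a b c d : ℂ) : M3 :=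
  a • tp 1 1 1 + b • tp 1 σz σz + c • tp σz 1 σz + d • tp σz σz 1

lemma conjTranspose_pauliComb (a b c d : ℂ) :
    (pauliComb a b c d)ᴴ = pauliComb (star a) (star b) (star c) (star d) := by
  simp only [pauliComb, Matrix.conjTranspose_add, Matrix.conjTranspose_smul, conjTranspose_tp,
    Matrix.conjTranspose_one, conjTranspose_σz]

/-- `PT` is the normalized trace form, for which the Pauli strings are orthonormal. -/
lemma PT_pauliComb_mul (a b c d a' b' c' d' : ℂ) :
    PT (pauliComb a b c d * pauliComb a' b' c' d') =
      (a * a' + b * b' + c * c' + d * d') • 1 := by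
  simp only [pauliComb, add_mul, mul_add, smul_mul_assoc, mul_smul_comm, tp_mul, σz_mul_σz,
    Matrix.one_mul, Matrix.mul_one, PT_add, PT_smul, PT_tp, Matrix.trace_one, trace_σz,
    Fintype.card_fin, zero_div, mul_zero, zero_mul, zero_smul, smul_zero, add_zero]
  match_scalars
  ring

lemma A_eq_pauliComb (β J : ℝ) :
    A β J = pauliComb
      ((K₀ β ^ 2 * R₀ β J + K₃ β ^ 2 * R₃ β J : ℝ))
      ((K₀ β ^ 2 * R₃ β J + K₃ β ^ 2 * R₀ β J : ℝ))
      ((K₀ β * K₃ β * (R₀ β J + R₃ β J) : ℝ))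
      ((K₀ β * K₃ β * (R₀ β J + R₃ β J) : ℝ)) := by
  simp only [A, K12, K13, L23, pauliComb, add_mul, mul_add, smul_mul_assoc, mul_smul_comm,
    tp_mul, σz_mul_σz, Matrix.one_mul, Matrix.mul_one]
  push_cast
  module

lemma transfer_coeff_sq_sum (β J : ℝ) :
    (K₀ β ^ 2 * R₀ β J + K₃ β ^ 2 * R₃ β J) ^ 2 + (K₀ β ^ 2 * R₃ β J + K₃ β ^ 2 * R₀ β J) ^ 2
      + 2 * (K₀ β * K₃ β * (R₀ β J + R₃ β J)) ^ 2 = (αc β J)⁻¹ := by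
  have h2 : Real.exp (2 * β) = Real.exp β ^ 2 := by
    rw [← Real.exp_nat_mul]; norm_num
  have h4 : Real.exp (4 * β) = Real.exp β ^ 4 := by
    rw [← Real.exp_nat_mul]; norm_num
  have h2J : Real.exp (2 * J * β) = Real.exp (J * β) ^ 2 := by
    rw [← Real.exp_nat_mul]; norm_num [mul_assoc]
  rw [αc, inv_div, h2, h4, h2J, K₀, K₃, R₀, R₃]
  ring

lemma αc_pos (β J : ℝ) : 0 < αc β J := by
  unfold αc
  positivity

lemma PT_conjTranspose_A_mul_A (β J : ℝ) :
    PT ((A β J)ᴴ * A β J) = (((αc β J : ℝ) : ℂ))⁻¹ • (1 : Matrix (Fin 2) (Fin 2) ℂ) := by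
  rw [A_eq_pauliComb, conjTranspose_pauliComb, PT_pauliComb_mul]
  simp only [Complex.star_def, Complex.conj_ofReal]
  rw [← Complex.ofReal_inv, ← transfer_coeff_sq_sum β J]
  congr 1
  push_cast
  ring

theorem fixed_point_equation_general (β J : ℝ) :
    PT ((A β J)ᴴ *
          tp 1 (((αc β J : ℝ) : ℂ) • 1) (((αc β J : ℝ) : ℂ) • 1) * A β J) =
        ((αc β J : ℝ) : ℂ) • (1 : Matrix (Fin 2) (Fin 2) ℂ) ∧
      PT ((A β J)ᴴ * A β J) = (((αc β J : ℝ) : ℂ))⁻¹ • (1 : Matrix (Fin 2) (Fin 2) ℂ) := by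
  refine ⟨?_, PT_conjTranspose_A_mul_A β J⟩
  have hα : ((αc β J : ℝ) : ℂ) ≠ 0 := Complex.ofReal_ne_zero.mpr (αc_pos β J).ne'
  rw [tp_smul_smul, tp_one_one_one, Matrix.mul_smul, Matrix.mul_one, Matrix.smul_mul, PT_smul,
    PT_conjTranspose_A_mul_A, smul_smul, mul_assoc, mul_inv_cancel₀ hα, mul_one]

/-- The constant matrix `h = α•1₂` solves the fixed-point equation
`PT(Aᴴ (1⊗h⊗h) A) = h`; equivalently `PT(Aᴴ A) = α⁻¹•1₂`. -/
theorem fixed_point_equation (β J : ℝ) (hβ : 0 < β) (hJ : 0 < J) :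
    PT ((A β J)ᴴ *
          tp 1 (((αc β J : ℝ) : ℂ) • 1) (((αc β J : ℝ) : ℂ) • 1) * A β J) =
        ((αc β J : ℝ) : ℂ) • (1 : Matrix (Fin 2) (Fin 2) ℂ) ∧
      PT ((A β J)ᴴ * A β J) = (((αc β J : ℝ) : ℂ))⁻¹ • (1 : Matrix (Fin 2) (Fin 2) ℂ) :=
  fixed_point_equation_general β J
end
end

section
/- For every a₀ : Matrix (Fin 2) (Fin 2) ℂ and every c ∈ M, α³ * τ₇(ι_0(a₀) * ι_{1,3,4}(c) * D) = α * τ₃((a₀ ⊗ 𝓔(c) ⊗ 1₂) * (Aᴴ * A)), where 𝓔(c) = α • PT(Aᴴ * c * A). (This is the localized Markov-state property φ↾_{A_{P(x)∪{x}∪S(x)}} = φ↾_{A_{P(x)∪{x}}} ∘ E_x of the state φ_α at the vertex x = (1) of the Cayley tree of order 2, whose predecessor is the root o and whose direct successors are (1,1),(1,2).) -/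
open Matrix Kronecker

noncomputable section

/-- The normalized trace on `M₂ ⊗ M₂ ⊗ M₂`. -/
def τ₃ (m : M3) : ℂ := (1 / 8 : ℂ) * Matrix.trace m

/-- The sevenfold tensor product `M₂^{⊗7}`: sites `0,…,6` are the vertices
`o,(1),(2),(1,1),(1,2),(2,1),(2,2)` of the first three levels of the Cayley tree of order 2. -/
abbrev B7 : Type := Matrix (Fin 7 → Fin 2) (Fin 7 → Fin 2) ℂ

/-- The unital embedding of `M₂ ⊗ M₂ ⊗ M₂` into `M₂^{⊗7}` acting on sites `p, q, r`. -/
def emb (p q r : Fin 7) (m : M3) : B7 :=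
  Matrix.of fun f g =>
    m (f p, f q, f r) (g p, g q, g r) *
      ∏ j ∈ Finset.univ.filter (fun j => j ∉ ({p, q, r} : Finset (Fin 7))),
        (if f j = g j then (1 : ℂ) else 0)

/-- The normalized trace on `M₂^{⊗7}`. -/
def τ₇ (b : B7) : ℂ := (1 / 128 : ℂ) * Matrix.trace b

/-- The level-2 density `D = ι₀₁₂(AᴴA) ι₁₃₄(AᴴA) ι₂₅₆(AᴴA)`. -/
def D (β J : ℝ) : B7 :=
  emb 0 1 2 ((A β J)ᴴ * A β J) * emb 1 3 4 ((A β J)ᴴ * A β J) * emb 2 5 6 ((A β J)ᴴ * A β J)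

/-- The transition expectation `𝓔(c) = α • PT(Aᴴ c A)`. -/
def TE (β J : ℝ) (c : M3) : Matrix (Fin 2) (Fin 2) ℂ :=
  ((αc β J : ℝ) : ℂ) • PT ((A β J)ᴴ * c * A β J)

/-- The single-site unital embedding of `M₂` into `M₂^{⊗7}` at site `p`. -/
def emb₁ (p : Fin 7) (a : Matrix (Fin 2) (Fin 2) ℂ) : B7 :=
  Matrix.of fun f g =>
    a (f p) (g p) *
      ∏ j ∈ Finset.univ.filter (fun j => j ≠ p), (if f j = g j then (1 : ℂ) else 0)

/-!
Every factor of `A` is a polynomial in Pauli-`z` matrices, so `A` and `AᴴA` are diagonal in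
the spin basis and both traces reduce to sums of Boltzmann weights over spin configurations.
The constant `α` is chosen so that `α ∑_{p,q} |A(v,p,q)|² = 4` for both values of the spin `v`;
hence summing out the two leaves `(2,1), (2,2)` below the vertex `(2)` only produces the factor
`4/α`, and what remains is the three-site expression on the right.
-/

theorem Matrix.trace_mul_diagonal {n R : Type*} [Fintype n] [DecidableEq n]
    [NonUnitalNonAssocSemiring R] (X : Matrix n n R) (d : n → R) :
    trace (X * diagonal d) = ∑ i, X i i * d i := by
  simp only [trace, diag_apply, mul_diagonal]

theorem Fin.sum_pi_succ {M β : Type*} [AddCommMonoid M] [Fintype β] {n : ℕ}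
    (F : (Fin (n + 1) → β) → M) :
    ∑ f, F f = ∑ x, ∑ f : Fin n → β, F (Fin.cons x f) := by
  rw [← (Fin.consEquiv fun _ => β).sum_comp, Fintype.sum_prod_type]
  rfl

theorem sum_fin_seven_pi {M β : Type*} [AddCommMonoid M] [Fintype β]
    (F : β → β → β → β → β → β → β → M) :
    ∑ f : Fin 7 → β, F (f 0) (f 1) (f 2) (f 3) (f 4) (f 5) (f 6) =
      ∑ s, ∑ u, ∑ v, ∑ m, ∑ n, ∑ p, ∑ q, F s u v m n p q := by
  simp only [Fin.sum_pi_succ, Fintype.sum_unique]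
  rfl

def spin : Fin 2 → ℝ := ![1, -1]

theorem σz_eq_diagonal : σz = diagonal fun i => (spin i : ℂ) := by
  ext i j
  fin_cases i <;> fin_cases j <;> simp [σz, spin]

theorem tp_diagonal (a b c : Fin 2 → ℂ) :
    tp (diagonal a) (diagonal b) (diagonal c) = diagonal fun p => a p.1 * (b p.2.1 * c p.2.2) := by
  simp only [tp, diagonal_kronecker_diagonal]

theorem tp_one_apply_self (a b : Matrix (Fin 2) (Fin 2) ℂ) (p : Fin 2 × Fin 2 × Fin 2) :
    tp a b 1 p p = a p.1 p.1 * b p.2.1 p.2.1 := by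
  simp [tp, kroneckerMap_apply]

def transferDiag (β J : ℝ) (p : Fin 2 × Fin 2 × Fin 2) : ℝ :=
  (K₀ β + K₃ β * (spin p.1 * spin p.2.1)) * (K₀ β + K₃ β * (spin p.1 * spin p.2.2)) *
    (R₀ β J + R₃ β J * (spin p.2.1 * spin p.2.2))

theorem A_eq_diagonal (β J : ℝ) : A β J = diagonal fun p => (transferDiag β J p : ℂ) := by
  simp only [A, K12, K13, L23, σz_eq_diagonal, ← diagonal_one, tp_diagonal, ← diagonal_smul,
    diagonal_add, diagonal_mul_diagonal]
  congr 1
  funext p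
  simp only [transferDiag, Pi.smul_apply, smul_eq_mul]
  push_cast
  ring

theorem conjTranspose_A_mul_A (β J : ℝ) :
    (A β J)ᴴ * A β J = diagonal fun p => ((transferDiag β J p ^ 2 : ℝ) : ℂ) := by
  rw [A_eq_diagonal, diagonal_conjTranspose, diagonal_mul_diagonal]
  congr 1
  funext p
  simp only [Pi.star_apply, Complex.star_def, Complex.conj_ofReal]
  push_cast
  ring

theorem sum_transferDiag_sq (β J : ℝ) (v : Fin 2) :
    ∑ p, ∑ q, transferDiag β J (v, p, q) ^ 2 =
      Real.exp (2 * J * β) * (Real.exp (4 * β) + 1) + 2 * Real.exp (2 * β) := by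
  have h2 : Real.exp (2 * β) = Real.exp β ^ 2 := by
    rw [← Real.exp_nat_mul]; ring_nf
  have h4 : Real.exp (4 * β) = Real.exp β ^ 4 := by
    rw [← Real.exp_nat_mul]; ring_nf
  have h2J : Real.exp (2 * J * β) = Real.exp (J * β) ^ 2 := by
    rw [← Real.exp_nat_mul]; ring_nf
  rw [h2, h4, h2J]
  fin_cases v <;> simp [Fin.sum_univ_two, transferDiag, spin, K₀, K₃, R₀, R₃] <;> ring

theorem αc_mul_sum_transferDiag_sq (β J : ℝ) (v : Fin 2) :
    αc β J * ∑ p, ∑ q, transferDiag β J (v, p, q) ^ 2 = 4 := by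
  rw [sum_transferDiag_sq, αc]
  exact div_mul_cancel₀ _ (by positivity)

theorem TE_apply_self (β J : ℝ) (c : M3) (u : Fin 2) :
    TE β J c u u = αc β J * (1 / 4 *
      ∑ m, ∑ n, ((transferDiag β J (u, m, n) ^ 2 : ℝ) : ℂ) * c (u, m, n) (u, m, n)) := by
  simp only [TE, PT, A_eq_diagonal, diagonal_conjTranspose, mul_diagonal, diagonal_mul,
    Matrix.smul_apply, of_apply, smul_eq_mul, Pi.star_apply, Complex.star_def,
    Complex.conj_ofReal]
  push_cast
  ring_nf

theorem emb_diagonal (p q r : Fin 7) (d : Fin 2 × Fin 2 × Fin 2 → ℂ) :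
    emb p q r (diagonal d) = diagonal fun f => d (f p, f q, f r) := by
  ext f g
  by_cases h : f = g
  · subst h
    simp [emb]
  rw [diagonal_apply_ne _ h]
  obtain ⟨j, hj⟩ := Function.ne_iff.mp h
  by_cases hmem : j ∈ ({p, q, r} : Finset (Fin 7))
  · have hne : (f p, f q, f r) ≠ (g p, g q, g r) := by
      simp only [Finset.mem_insert, Finset.mem_singleton] at hmem
      rcases hmem with rfl | rfl | rfl <;> simp [hj]
    simp [emb, diagonal_apply_ne _ hne]
  · refine mul_eq_zero_of_right _ ?_
    exact Finset.prod_eq_zero (i := j) (by simpa using hmem) (by simp [hj])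

theorem emb₁_mul_emb_apply_self {p q r s : Fin 7} (hp : p ∉ ({q, r, s} : Finset (Fin 7)))
    (a : Matrix (Fin 2) (Fin 2) ℂ) (c : M3) (f : Fin 7 → Fin 2) :
    (emb₁ p a * emb q r s c) f f = a (f p) (f p) * c (f q, f r, f s) (f q, f r, f s) := by
  rw [mul_apply, Finset.sum_eq_single f]
  · simp [emb₁, emb]
  · intro g _ hg
    obtain ⟨j, hj⟩ := Function.ne_iff.mp hg
    by_cases hjp : j = p
    · subst hjp
      refine mul_eq_zero_of_right _ (mul_eq_zero_of_right _ ?_)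
      exact Finset.prod_eq_zero (i := j) (by simpa using hp) (by simp [hj])
    · refine mul_eq_zero_of_left (mul_eq_zero_of_right _ ?_) _
      exact Finset.prod_eq_zero (i := j) (by simpa using hjp) (by simp [Ne.symm hj])
  · simp

theorem D_eq_diagonal (β J : ℝ) :
    D β J = diagonal fun f =>
      ((transferDiag β J (f 0, f 1, f 2) ^ 2 : ℝ) : ℂ) *
        ((transferDiag β J (f 1, f 3, f 4) ^ 2 : ℝ) : ℂ) *
          ((transferDiag β J (f 2, f 5, f 6) ^ 2 : ℝ) : ℂ) := by
  simp only [D, conjTranspose_A_mul_A, emb_diagonal, diagonal_mul_diagonal]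

/-- The theorem in the spin basis, `g` being the diagonal of `AᴴA`; by `hg`, the sum over the
leaves `5, 6` is `4 / α`. -/
theorem sum_tree_weights_eq (α : ℂ) (a : Fin 2 → ℂ) (c g : Fin 2 × Fin 2 × Fin 2 → ℂ)
    (hg : ∀ v, α * ∑ p, ∑ q, g (v, p, q) = 4) :
    α ^ 3 * (1 / 128 * ∑ f : Fin 7 → Fin 2, a (f 0) * c (f 1, f 3, f 4) *
        (g (f 0, f 1, f 2) * g (f 1, f 3, f 4) * g (f 2, f 5, f 6))) =
      α * (1 / 8 * ∑ p,
        a p.1 * (α * (1 / 4 * ∑ m, ∑ n, g (p.2.1, m, n) * c (p.2.1, m, n))) * g p) := by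
  rw [sum_fin_seven_pi fun s u v m n p q =>
    a s * c (u, m, n) * (g (s, u, v) * g (u, m, n) * g (v, p, q))]
  have hα : α ≠ 0 := by
    rintro rfl
    simpa using hg 0
  have hleaves (v : Fin 2) : ∑ p, ∑ q, g (v, p, q) = 4 / α :=
    eq_div_of_mul_eq hα ((mul_comm _ _).trans (hg v))
  simp only [← mul_assoc, ← Finset.mul_sum, hleaves, Fintype.sum_prod_type]
  simp only [Finset.mul_sum, Finset.sum_mul]
  congr! 5
  field_simp
  ring

theorem localized_markov_property_general (β J : ℝ)
    (a₀ : Matrix (Fin 2) (Fin 2) ℂ) (c : M3) :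
    ((αc β J : ℝ) : ℂ) ^ 3 * τ₇ (emb₁ 0 a₀ * emb 1 3 4 c * D β J) =
      ((αc β J : ℝ) : ℂ) * τ₃ (tp a₀ (TE β J c) 1 * ((A β J)ᴴ * A β J)) := by
  have h0 : (0 : Fin 7) ∉ ({1, 3, 4} : Finset (Fin 7)) := by decide
  have hnorm (v : Fin 2) :
      (αc β J : ℂ) * ∑ p, ∑ q, ((transferDiag β J (v, p, q) ^ 2 : ℝ) : ℂ) = 4 := by
    exact_mod_cast αc_mul_sum_transferDiag_sq β J v
  rw [τ₇, τ₃, D_eq_diagonal, conjTranspose_A_mul_A, trace_mul_diagonal, trace_mul_diagonal]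
  simp only [emb₁_mul_emb_apply_self h0, tp_one_apply_self, TE_apply_self]
  exact sum_tree_weights_eq _ (fun s => a₀ s s) (fun p => c p p)
    (fun p => ((transferDiag β J p ^ 2 : ℝ) : ℂ)) hnorm

/-- The localized Markov-state property of `φ_α` at the vertex `x = (1)` of the Cayley
tree of order 2: `φ↾_{A_{P(x)∪{x}∪S(x)}} = φ↾_{A_{P(x)∪{x}}} ∘ E_x`. -/
theorem localized_markov_property (β J : ℝ) (hβ : 0 < β) (hJ : 0 < J)
    (a₀ : Matrix (Fin 2) (Fin 2) ℂ) (c : M3) :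
    ((αc β J : ℝ) : ℂ) ^ 3 * τ₇ (emb₁ 0 a₀ * emb 1 3 4 c * D β J) =
      ((αc β J : ℝ) : ℂ) * τ₃ (tp a₀ (TE β J c) 1 * ((A β J)ᴴ * A β J)) :=
  localized_markov_property_general β J a₀ c
end
end
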